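/- arXiv:1006.0600 — 4 statements merged into one kernel-verified Lean document; each statement's English description precedes it below -/
import Mathlib

section
/- Let p, q ≥ 2 be integers. The real analytic map h : ℂ² → ℂ defined by h(x,y) = (conj(x) · conj(y)) · (x^p + y^q), viewed as a map ℝ⁴ → ℝ², has a non-origin critical point in every neighbourhood of 0 if and only if p = q = 2. Equivalently, h has an isolated critical point at the origin if and only if (p,q) ≠ (2,2). -/
/-!
Away from the axes, the first two critical-point equations say
`p ‖x‖ ^ p = ‖x ^ p + y ^ q‖ = q ‖y‖ ^ q`, so the triangle inequality
`‖x ^ p + y ^ q‖ ≤ ‖x‖ ^ p + ‖y‖ ^ q` gives `1 ≤ 1 / p + 1 / q`, which for `p, q ≥ 2` forces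
`p = q = 2`; on the axes the same equations force `x = y = 0`. Conversely, for `p = q = 2`
every diagonal point `(x, x)` is critical.
-/

open Complex

/-- The three equations characterising `(x, y)` as a critical point of
`h(x, y) = conj (x y) (x ^ p + y ^ q)`, viewed as a real map `ℝ⁴ → ℝ²`. -/
def IsCriticalPt (p q : ℕ) (x y : ℂ) : Prop :=
  (p : ℝ)^2 * ‖x*y‖^2 * ‖x‖^(2*(p-1)) = ‖y‖^2 * ‖x^p + y^q‖^2 ∧
  (q : ℝ)^2 * ‖x*y‖^2 * ‖y‖^(2*(q-1)) = ‖x‖^2 * ‖x^p + y^q‖^2 ∧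
  x * (starRingEnd ℂ) y * ((‖x^p + y^q‖^2 : ℝ) : ℂ)
    = (p : ℂ) * q * ((‖x*y‖^2 : ℝ) : ℂ) * ((starRingEnd ℂ) x)^(p-1) * y^(q-1)

-- At `n = 0` the truncated `n - 1` is harmless: both sides vanish.
lemma natCast_sq_mul_sq_mul_pow_pred (n : ℕ) (a : ℝ) :
    (n : ℝ)^2 * a^2 * a^(2*(n-1)) = (n * a^n)^2 := by
  rcases Nat.eq_zero_or_pos n with rfl | hn
  · simp
  · rw [mul_pow, mul_assoc, ← pow_add, ← pow_mul]
    congr 2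
    omega

lemma natCast_mul_pow_eq_of_sq_eq {n : ℕ} {a b s : ℝ} (ha : 0 ≤ a) (hb : b ≠ 0) (hs : 0 ≤ s)
    (h : (n : ℝ)^2 * (a*b)^2 * a^(2*(n-1)) = b^2 * s^2) : n * a^n = s := by
  have hsq : (n * a^n)^2 = s^2 := by
    apply mul_right_cancel₀ (pow_ne_zero 2 hb)
    linear_combination h - b^2 * natCast_sq_mul_sq_mul_pow_pred n a
  exact (sq_eq_sq₀ (by positivity) hs).mp hsq

lemma Nat.eq_two_of_mul_le_add {p q : ℕ} (hp : 2 ≤ p) (hq : 2 ≤ q) (h : p * q ≤ p + q) :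
    p = 2 ∧ q = 2 := by
  constructor <;> nlinarith

lemma natCast_mul_le_add_of_mul_eq {p q : ℕ} {a b s : ℝ} (ha : p * a = s) (hb : q * b = s)
    (hs : 0 < s) (hle : s ≤ a + b) : p * q ≤ p + q := by
  have hmul : ((p * q : ℕ) : ℝ) * s ≤ (p + q : ℕ) * s :=
    calc ((p * q : ℕ) : ℝ) * s ≤ p * q * (a + b) := by push_cast; gcongr
      _ = (p + q : ℕ) * s := by push_cast; linear_combination (q : ℝ) * ha + (p : ℝ) * hb
  exact_mod_cast le_of_mul_le_mul_right hmul hs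

namespace IsCriticalPt

variable {p q : ℕ} {x y : ℂ}

lemma natCast_mul_norm_pow_left (h : IsCriticalPt p q x y) (hy : y ≠ 0) :
    p * ‖x‖^p = ‖x^p + y^q‖ :=
  natCast_mul_pow_eq_of_sq_eq (norm_nonneg x) (norm_ne_zero_iff.2 hy) (norm_nonneg _)
    (by rw [← norm_mul]; exact h.1)

lemma natCast_mul_norm_pow_right (h : IsCriticalPt p q x y) (hx : x ≠ 0) :
    q * ‖y‖^q = ‖x^p + y^q‖ :=
  natCast_mul_pow_eq_of_sq_eq (norm_nonneg y) (norm_ne_zero_iff.2 hx) (norm_nonneg _)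
    (by rw [← norm_mul, mul_comm y]; exact h.2.1)

lemma left_ne_zero (h : IsCriticalPt p q x y) (hp : p ≠ 0) (hxy : (x, y) ≠ (0, 0)) : x ≠ 0 := by
  rintro rfl
  have hy : y ≠ 0 := by rintro rfl; exact hxy rfl
  have h0 := h.natCast_mul_norm_pow_left hy
  simp only [norm_zero, zero_pow hp, mul_zero, zero_add, norm_pow] at h0
  exact pow_ne_zero q (norm_ne_zero_iff.2 hy) h0.symm

lemma right_ne_zero (h : IsCriticalPt p q x y) (hq : q ≠ 0) (hxy : (x, y) ≠ (0, 0)) : y ≠ 0 := by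
  rintro rfl
  have hx : x ≠ 0 := by rintro rfl; exact hxy rfl
  have h0 := h.natCast_mul_norm_pow_right hx
  simp only [norm_zero, zero_pow hq, mul_zero, add_zero, norm_pow] at h0
  exact pow_ne_zero p (norm_ne_zero_iff.2 hx) h0.symm

theorem eq_two (h : IsCriticalPt p q x y) (hp : 2 ≤ p) (hq : 2 ≤ q) (hxy : (x, y) ≠ (0, 0)) :
    p = 2 ∧ q = 2 := by
  have hx := h.left_ne_zero (by omega) hxy
  have hy := h.right_ne_zero (by omega) hxy
  have hs : 0 < ‖x^p + y^q‖ := by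
    rw [← h.natCast_mul_norm_pow_left hy]
    have hp0 : (0 : ℝ) < p := Nat.cast_pos.2 (by omega)
    positivity
  refine Nat.eq_two_of_mul_le_add hp hq <| natCast_mul_le_add_of_mul_eq
    (h.natCast_mul_norm_pow_left hy) (h.natCast_mul_norm_pow_right hx) hs ?_
  simpa only [norm_pow] using norm_add_le (x^p) (y^q)

end IsCriticalPt

lemma isCriticalPt_two_two_diag (x : ℂ) : IsCriticalPt 2 2 x x := by
  have hn : ‖x^2 + x^2‖ = 2 * ‖x‖^2 := by rw [← two_mul, norm_mul, norm_pow]; norm_num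
  refine ⟨?_, ?_, ?_⟩
  · rw [hn, norm_mul]; ring
  · rw [hn, norm_mul]; ring
  · rw [hn, norm_mul]
    push_cast
    ring

/-- for `h(x,y) = conj(xy)(x^p + y^q)` with `p, q ≥ 2`, using the
characterization of critical points of `h` (as a real map `ℝ⁴ → ℝ²`) by the three
equations, `h` has non-origin critical points in every neighbourhood of the origin
iff `p = q = 2`; equivalently `h` has an isolated critical point at `0` iff `(p,q) ≠ (2,2)`. -/
theorem stmt1 (p q : ℕ) (hp : 2 ≤ p) (hq : 2 ≤ q) :
    (∀ ε : ℝ, 0 < ε → ∃ x y : ℂ, (x, y) ≠ (0, 0) ∧ ‖(x, y)‖ < ε ∧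
      ((p : ℝ)^2 * ‖x*y‖^2 * ‖x‖^(2*(p-1))
          = ‖y‖^2 * ‖x^p + y^q‖^2 ∧
       (q : ℝ)^2 * ‖x*y‖^2 * ‖y‖^(2*(q-1))
          = ‖x‖^2 * ‖x^p + y^q‖^2 ∧
       x * (starRingEnd ℂ) y * ((‖x^p + y^q‖^2 : ℝ) : ℂ)
          = (p : ℂ) * q * ((‖x*y‖^2 : ℝ) : ℂ)
            * ((starRingEnd ℂ) x)^(p-1) * y^(q-1))) ↔ (p = 2 ∧ q = 2) := by
  constructor
  · intro H
    obtain ⟨x, y, hxy, -, hcrit⟩ := H 1 one_pos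
    exact IsCriticalPt.eq_two hcrit hp hq hxy
  · rintro ⟨rfl, rfl⟩ ε hε
    refine ⟨(ε / 2 : ℝ), (ε / 2 : ℝ), ?_, ?_, isCriticalPt_two_two_diag _⟩
    · simp [hε.ne']
    · simp [Prod.norm_def, abs_of_pos hε]
      linarith
end

section
/- Let p, q ≥ 2 with gcd(p,q) = 1, and suppose the system p²|x|^{2p} = q²|y|^{2q} = |x^p + y^q|² together with x·conj(y)·|x^p+y^q|² = pq|xy|²·conj(x)^{p-1}·y^{q-1} has a solution with x ≠ 0 and y ≠ 0. Then p = q = 2. -/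
/-!
Put `a = |x|^p`, `b = |y|^q` and `s = |x^p + y^q|`. The two modulus equations say
`p a = q b = s`, and `s > 0` since `x ≠ 0`. The triangle inequality `s ≤ a + b = s/p + s/q`
then forces `1 ≤ 1/p + 1/q`, which for `p, q ≥ 2` leaves only `p = q = 2`.
-/

open Complex

lemma one_le_inv_add_inv_of_mul_eq_of_le_add {p q a b s : ℝ} (hs : 0 < s)
    (ha : p * a = s) (hb : q * b = s) (hab : s ≤ a + b) : 1 ≤ p⁻¹ + q⁻¹ := by
  have hp : p ≠ 0 := by rintro rfl; simp at ha; linarith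
  have hq : q ≠ 0 := by rintro rfl; simp at hb; linarith
  have hsum : s ≤ s * (p⁻¹ + q⁻¹) := by
    calc s ≤ a + b := hab
      _ = p * a * p⁻¹ + q * b * q⁻¹ := by field_simp
      _ = s * (p⁻¹ + q⁻¹) := by rw [ha, hb]; ring
  exact le_of_mul_le_mul_left (by simpa using hsum) hs

lemma Nat.eq_two_of_two_le_of_one_le_inv_add_inv {p q : ℕ} (hp : 2 ≤ p) (hq : 2 ≤ q)
    (h : 1 ≤ (p : ℝ)⁻¹ + (q : ℝ)⁻¹) : p = 2 ∧ q = 2 := by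
  have hp' : (2 : ℝ) ≤ p := by exact_mod_cast hp
  have hq' : (2 : ℝ) ≤ q := by exact_mod_cast hq
  have hpinv : (p : ℝ)⁻¹ ≤ 2⁻¹ := inv_anti₀ two_pos hp'
  have hqinv : (q : ℝ)⁻¹ ≤ 2⁻¹ := inv_anti₀ two_pos hq'
  have hp2 : (p : ℝ) = 2 := by
    have : (p : ℝ)⁻¹ = 2⁻¹ := by linarith
    simpa using this
  have hq2 : (q : ℝ) = 2 := by
    have : (q : ℝ)⁻¹ = 2⁻¹ := by linarith
    simpa using this
  exact ⟨by exact_mod_cast hp2, by exact_mod_cast hq2⟩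

lemma mul_pow_norm_eq_of_sq_eq {n k : ℕ} {z : ℂ} {s : ℝ} (hs : 0 ≤ s)
    (h : (k : ℝ) ^ 2 * ‖z‖ ^ (2 * n) = s ^ 2) : k * ‖z‖ ^ n = s := by
  rw [← sq_eq_sq₀ (by positivity) hs, mul_pow, ← pow_mul, mul_comm n, h]

theorem stmt2_general (p q : ℕ) (hp : 2 ≤ p) (hq : 2 ≤ q)
    (x y : ℂ) (hx : x ≠ 0)
    (h1 : (p : ℝ)^2 * ‖x‖^(2*p) = (q : ℝ)^2 * ‖y‖^(2*q))
    (h2 : (q : ℝ)^2 * ‖y‖^(2*q) = ‖x^p + y^q‖^2) :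
    p = 2 ∧ q = 2 := by
  set s := ‖x ^ p + y ^ q‖
  have ha : p * ‖x‖ ^ p = s := mul_pow_norm_eq_of_sq_eq (norm_nonneg _) (h1.trans h2)
  have hb : q * ‖y‖ ^ q = s := mul_pow_norm_eq_of_sq_eq (norm_nonneg _) h2
  have hs : 0 < s := by
    rw [← ha]
    have : 0 < ‖x‖ := norm_pos_iff.mpr hx
    have : (0 : ℝ) < p := by exact_mod_cast (show 0 < p by omega)
    positivity
  have htri : s ≤ ‖x‖ ^ p + ‖y‖ ^ q := by
    simpa only [norm_pow] using norm_add_le (x ^ p) (y ^ q)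
  exact Nat.eq_two_of_two_le_of_one_le_inv_add_inv hp hq
    (one_le_inv_add_inv_of_mul_eq_of_le_add hs ha hb htri)

/-- if the simplified critical-point system of
`conj(xy)(x^p+y^q)` has a solution with `x ≠ 0 ≠ y`, then `p = q = 2`. -/
theorem stmt2 (p q : ℕ) (hp : 2 ≤ p) (hq : 2 ≤ q) (hpq : Nat.gcd p q = 1)
    (x y : ℂ) (hx : x ≠ 0) (hy : y ≠ 0)
    (h1 : (p : ℝ)^2 * ‖x‖^(2*p) = (q : ℝ)^2 * ‖y‖^(2*q))
    (h2 : (q : ℝ)^2 * ‖y‖^(2*q) = ‖x^p + y^q‖^2)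
    (h3 : x * (starRingEnd ℂ) y * ((‖x^p + y^q‖^2 : ℝ) : ℂ)
        = (p : ℂ) * q * ((‖x*y‖^2 : ℝ) : ℂ)
          * ((starRingEnd ℂ) x)^(p-1) * y^(q-1)) :
    p = 2 ∧ q = 2 :=
  stmt2_general p q hp hq x y hx h1 h2
end

section
/- Let r > 2. Consider the linear system (indexed by the vertices of the plumbing graph of L_F for F = conj(xy)(x²+y³)+z^r): k - k_{1,1} - k_{2,1} - k_{3,1} = 1; -k + 3r·k_{1,1} = 2 - 3r; -k + 2r·k_{2,1} = 2 - 2r; -k + 2k_{3,1} - k_{3,2} = 0; -k_{3,j-1} + 2k_{3,j} - k_{3,j+1} = 0 for 2 ≤ j ≤ r-2; -k_{3,r-2} + 2k_{3,r-1} = 0. Its unique rational solution is k = 10 - 6r, k_{1,1} = 4/r - 3, k_{2,1} = 6/r - 4, k_{3,j} = (10/r)(r - j) - 6(r - j) for 1 ≤ j ≤ r-1 (so k_{3,r-1} = 10/r - 6). In particular, the solution is never entirely integral: k_{1,1} ∈ ℤ forces r = 4, but then k_{2,1} = 6/4 - 4 ∉ ℤ. -/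
/-- the adjunction linear system for the plumbing graph of the link
of `conj(xy)(x²+y³)+z^r`, `r > 2`, has the unique rational solution
`k = 10-6r`, `k₁₁ = 4/r - 3`, `k₂₁ = 6/r - 4`, `k₃ⱼ = (10/r)(r-j) - 6(r-j)`,
which is never entirely integral. -/
theorem stmt13 (r : ℕ) (hr : 2 < r) (k k11 k21 : ℚ) (k3 : ℕ → ℚ)
    (e1 : k - k11 - k21 - k3 1 = 1)
    (e2 : -k + 3 * r * k11 = 2 - 3 * r)
    (e3 : -k + 2 * r * k21 = 2 - 2 * r)
    (e4 : -k + 2 * k3 1 - k3 2 = 0)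
    (e5 : ∀ j, 2 ≤ j → j ≤ r - 2 → -k3 (j - 1) + 2 * k3 j - k3 (j + 1) = 0)
    (e6 : -k3 (r - 2) + 2 * k3 (r - 1) = 0) :
    k = 10 - 6 * r ∧ k11 = 4 / r - 3 ∧ k21 = 6 / r - 4 ∧
    (∀ j, 1 ≤ j → j ≤ r - 1 →
      k3 j = (10 / r) * ((r : ℚ) - j) - 6 * ((r : ℚ) - j)) ∧
    ¬ ((∃ m : ℤ, k11 = m) ∧ (∃ m : ℤ, k21 = m)) := by
  have hr3 : 3 ≤ r := hr
  have hrQ : (r : ℚ) ≠ 0 := Nat.cast_ne_zero.mpr (by omega)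
  have key : ∀ j, 1 ≤ j → j ≤ r - 1 → k3 j = k + j * (k3 1 - k) := by
    intro j
    induction j using Nat.strong_induction_on with
    | _ j ih =>
      intro hj1 hj2
      rcases j with _ | _ | _ | m
      · omega
      · push_cast; ring
      · push_cast; linear_combination -e4
      · have h1 := ih (m + 2) (by omega) (by omega) (by omega)
        have h2 := ih (m + 1) (by omega) (by omega) (by omega)
        have h3 : -k3 (m + 1) + 2 * k3 (m + 2) - k3 (m + 3) = 0 :=
          e5 (m + 2) (by omega) (by omega)
        push_cast at h1 h2 ⊢
        linear_combination 2 * h1 - h2 - h3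
  have c2 : ((r - 2 : ℕ) : ℚ) = (r : ℚ) - 2 := by
    rw [Nat.cast_sub (by omega)]; norm_num
  have c1 : ((r - 1 : ℕ) : ℚ) = (r : ℚ) - 1 := by
    rw [Nat.cast_sub (by omega)]; norm_num
  have hA := key (r - 2) (by omega) (by omega)
  have hB := key (r - 1) (by omega) (by omega)
  rw [hA, hB, c2, c1] at e6
  have hrc : (r : ℚ) * (k3 1 - k) = -k := by linear_combination e6
  have hk : k = 10 - 6 * r := by
    linear_combination (6 * (r : ℚ)) * e1 + 2 * e2 + 3 * e3 + 6 * hrc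
  have h11 : k11 = 4 / r - 3 := by
    field_simp
    linear_combination (1/3) * e2 + (1/3) * hk
  have h21 : k21 = 6 / r - 4 := by
    field_simp
    linear_combination (1/2) * e3 + (1/2) * hk
  refine ⟨hk, h11, h21, ?_, ?_⟩
  · intro j hj1 hj2
    rw [key j hj1 hj2]
    field_simp
    linear_combination (j : ℚ) * hrc + ((r : ℚ) - j) * hk
  · rintro ⟨⟨m, hm⟩, ⟨n, hn⟩⟩
    have ht : ((2 * m - n + 2 : ℤ) : ℚ) = 2 / r := by
      push_cast
      rw [hm] at h11
      rw [hn] at h21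
      field_simp at h11 h21 ⊢
      linear_combination 2 * h11 - h21
    have h0 : (0 : ℚ) < ((2 * m - n + 2 : ℤ) : ℚ) := by
      rw [ht]; positivity
    have h1 : ((2 * m - n + 2 : ℤ) : ℚ) < 1 := by
      rw [ht, div_lt_one (by positivity)]
      exact_mod_cast hr
    have h0' : (0 : ℤ) < 2 * m - n + 2 := by exact_mod_cast h0
    have h1' : (2 * m - n + 2 : ℤ) < 1 := by exact_mod_cast h1
    omega
end

section
/- For r > 2, there is no integer vector (k, k_{1,1}, k_{2,1}, k_{3,1}, …, k_{3,r-1}) ∈ ℤ^{r+2} satisfying: k - k_{1,1} - k_{2,1} - k_{3,1} = 1; -k + 3r·k_{1,1} = 2 - 3r; -k + 2r·k_{2,1} = 2 - 2r; -k + 2k_{3,1} - k_{3,2} = 0; -k_{3,j-1} + 2k_{3,j} - k_{3,j+1} = 0 for 2 ≤ j ≤ r-2; -k_{3,r-2} + 2k_{3,r-1} = 0 (when r = 3 the chain conditions reduce to -k + 2k_{3,1} - k_{3,2} = 0 and -k_{3,1} + 2k_{3,2} = 0). -/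
/-- for `r > 2` there is no integral solution of the adjunction
system of the plumbing graph of the link of `conj(xy)(x²+y³)+z^r`; i.e. the
canonical class is not integral. -/
theorem stmt14 (r : ℕ) (hr : 2 < r) :
    ¬ ∃ (k k11 k21 : ℤ) (k3 : ℕ → ℤ),
      k - k11 - k21 - k3 1 = 1 ∧
      -k + 3 * r * k11 = 2 - 3 * r ∧
      -k + 2 * r * k21 = 2 - 2 * r ∧
      -k + 2 * k3 1 - k3 2 = 0 ∧
      (∀ j, 2 ≤ j → j ≤ r - 2 → -k3 (j - 1) + 2 * k3 j - k3 (j + 1) = 0) ∧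
      -k3 (r - 2) + 2 * k3 (r - 1) = 0 := by
  rintro ⟨k, k11, k21, k3, h1, h2, h3, h4, h5, h6⟩
  set d := k3 1 - k with hd
  have key : ∀ j, 1 ≤ j → j ≤ r - 2 →
      k3 j = k + j * d ∧ k3 (j + 1) = k + (j + 1) * d := by
    intro j hj1 hj2
    induction j with
    | zero => omega
    | succ n ih =>
      rcases Nat.eq_or_lt_of_le hj1 with h | h
      · have hn : n = 0 := by omega
        subst hn
        constructor
        · push_cast; linarith
        · push_cast; linarith
      · have hn1 : 1 ≤ n := by omega
        have hn2 : n ≤ r - 2 := by omega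
        obtain ⟨ha, hb⟩ := ih hn1 hn2
        have hrec := h5 (n + 1) (by omega) hj2
        simp only [Nat.add_sub_cancel] at hrec
        refine ⟨hb, ?_⟩
        rw [ha, hb] at hrec
        push_cast at hrec ⊢
        linarith
  obtain ⟨ha, hb⟩ := key (r - 2) (by omega) le_rfl
  have hr1 : r - 2 + 1 = r - 1 := by omega
  rw [hr1] at hb
  have c2 : ((r - 2 : ℕ) : ℤ) = (r : ℤ) - 2 := by
    have : 2 ≤ r := by omega
    push_cast [this]; ring
  have c1 : ((r - 1 : ℕ) : ℤ) = (r : ℤ) - 1 := by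
    have : 1 ≤ r := by omega
    push_cast [this]; ring
  rw [ha, hb, c2] at h6
  have hk : k + (r : ℤ) * d = 0 := by linear_combination h6
  have hdvd : (r : ℤ) ∣ 2 := ⟨d + 3 * k11 + 3, by linear_combination -hk - h2⟩
  have : (r : ℤ) ≤ 2 := Int.le_of_dvd (by norm_num) hdvd
  omega
end
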